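/- Let L be an orthomodular ortholattice satisfying Godowski's equation 6-Go (for all a₁, …, a₆ ∈ L, (a₁ →₁ a₂) ⊓ (a₂ →₁ a₃) ⊓ (a₃ →₁ a₄) ⊓ (a₄ →₁ a₅) ⊓ (a₅ →₁ a₆) ⊓ (a₆ →₁ a₁) = (a₆ →₁ a₅) ⊓ (a₅ →₁ a₄) ⊓ (a₄ →₁ a₃) ⊓ (a₃ →₁ a₂) ⊓ (a₂ →₁ a₁) ⊓ (a₁ →₁ a₆)). Then for all a, b, c, d, e, f ∈ L with a ≤ bᶜ, b ≤ cᶜ, c ≤ dᶜ, d ≤ eᶜ, e ≤ fᶜ, f ≤ aᶜ, Mayet's equation holds: (a ⊔ b) ⊓ (d ⊔ e)ᶜ ⊓ (((((a ⊔ b) →₁ (d ⊔ e)ᶜ) →₁ ((e ⊔ f) →₁ (b ⊔ c)ᶜ)ᶜ)ᶜ) →₁ (c ⊔ d)) ≤ b ⊔ c ⊔ (e ⊔ f)ᶜ. -/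

import Mathlib

/-- An ortholattice: a bounded lattice with an orthocomplementation. -/
class Ortholattice (α : Type*) extends Lattice α, BoundedOrder α, Compl α where
  compl_compl : ∀ x : α, xᶜᶜ = x
  compl_antitone : ∀ x y : α, x ≤ y → yᶜ ≤ xᶜ
  inf_compl : ∀ x : α, x ⊓ xᶜ = ⊥
  sup_compl : ∀ x : α, x ⊔ xᶜ = ⊤

/-- The Sasaki implication `a →₁ b = aᶜ ⊔ (a ⊓ b)`. -/
def olImp1 {α : Type*} [Ortholattice α] (a b : α) : α := aᶜ ⊔ (a ⊓ b)

/-- The Dishkant implication `a →₂ b = b ⊔ (aᶜ ⊓ bᶜ)`. -/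
def olImp2 {α : Type*} [Ortholattice α] (a b : α) : α := b ⊔ (aᶜ ⊓ bᶜ)

/-!
Put `u = (a ⊔ b) →₁ (d ⊔ e)ᶜ`, `w = (e ⊔ f) →₁ (b ⊔ c)ᶜ` and `k = u ⊓ wᶜ`, so that the left-hand
side is `x = (a ⊔ b) ⊓ (d ⊔ e)ᶜ ⊓ ((u ⊓ kᶜ) →₁ (c ⊔ d))`. Orthomodularity shows that `x` lies
below every implication of the cycle `(e ⊔ f)ᶜ, kᶜ, u ⊓ kᶜ, c ⊔ d, bᶜ, fᶜ`; by 6-Go it then lies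
below every implication of the reversed cycle, in particular below `kᶜ →₁ (e ⊔ f)ᶜ`, which is at
most `k ⊔ (e ⊔ f)ᶜ ≤ b ⊔ c ⊔ (e ⊔ f)ᶜ`.
-/

namespace Ortholattice

variable {α : Type*} [Ortholattice α] {x y : α}

theorem compl_le_compl_of_le (h : x ≤ y) : yᶜ ≤ xᶜ := compl_antitone x y h

theorem le_compl_comm : x ≤ yᶜ ↔ y ≤ xᶜ :=
  ⟨fun h => by simpa only [Ortholattice.compl_compl] using compl_le_compl_of_le h,
   fun h => by simpa only [Ortholattice.compl_compl] using compl_le_compl_of_le h⟩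

theorem compl_le_comm : xᶜ ≤ y ↔ yᶜ ≤ x :=
  ⟨fun h => by simpa only [Ortholattice.compl_compl] using compl_le_compl_of_le h,
   fun h => by simpa only [Ortholattice.compl_compl] using compl_le_compl_of_le h⟩

theorem compl_sup_eq (x y : α) : (x ⊔ y)ᶜ = xᶜ ⊓ yᶜ :=
  le_antisymm (le_inf (compl_le_compl_of_le le_sup_left) (compl_le_compl_of_le le_sup_right))
    (le_compl_comm.1 (sup_le (le_compl_comm.1 inf_le_left) (le_compl_comm.1 inf_le_right)))

theorem compl_inf_eq (x y : α) : (x ⊓ y)ᶜ = xᶜ ⊔ yᶜ := by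
  rw [← Ortholattice.compl_compl (xᶜ ⊔ yᶜ), compl_sup_eq, Ortholattice.compl_compl,
    Ortholattice.compl_compl]

end Ortholattice

def IsOrthomodular (α : Type*) [Ortholattice α] : Prop :=
  ∀ a b : α, a ≤ b → a ⊔ (aᶜ ⊓ b) = b

/-- Godowski's equation 6-Go. -/
def Godowski6 (α : Type*) [Ortholattice α] : Prop :=
  ∀ a1 a2 a3 a4 a5 a6 : α,
    olImp1 a1 a2 ⊓ olImp1 a2 a3 ⊓ olImp1 a3 a4 ⊓ olImp1 a4 a5 ⊓ olImp1 a5 a6 ⊓ olImp1 a6 a1 =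
      olImp1 a6 a5 ⊓ olImp1 a5 a4 ⊓ olImp1 a4 a3 ⊓ olImp1 a3 a2 ⊓ olImp1 a2 a1 ⊓ olImp1 a1 a6

section SasakiImplication

variable {α : Type*} [Ortholattice α] {a b x y z : α}

theorem compl_le_olImp1 : aᶜ ≤ olImp1 a b := le_sup_left

theorem inf_le_olImp1 : a ⊓ b ≤ olImp1 a b := le_sup_right

theorem olImp1_eq_top_of_le (h : a ≤ b) : olImp1 a b = ⊤ := by
  rw [olImp1, inf_eq_left.2 h, sup_comm, Ortholattice.sup_compl]

theorem compl_olImp1 (a b : α) : (olImp1 a b)ᶜ = a ⊓ (a ⊓ b)ᶜ := by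
  rw [olImp1, Ortholattice.compl_sup_eq, Ortholattice.compl_compl]

theorem compl_olImp1_le_compl_sup_compl : (olImp1 a b)ᶜ ≤ aᶜ ⊔ bᶜ := by
  rw [compl_olImp1, ← Ortholattice.compl_inf_eq]
  exact inf_le_right

theorem olImp1_compl_le_sup : olImp1 aᶜ b ≤ a ⊔ b := by
  rw [olImp1, Ortholattice.compl_compl]
  exact sup_le_sup_left inf_le_right a

theorem sup_le_olImp1_compl (h : x ≤ yᶜ) (hz : x ≤ z) : x ⊔ y ≤ olImp1 yᶜ z := by
  rw [olImp1, Ortholattice.compl_compl, sup_comm]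
  exact sup_le_sup_left (le_inf h hz) y

end SasakiImplication

namespace IsOrthomodular

variable {α : Type*} [Ortholattice α] {k u x y z : α}

theorem sup_compl_sup_eq (hOM : IsOrthomodular α) (h : x ≤ yᶜ) : x ⊔ (x ⊔ y)ᶜ = yᶜ := by
  rw [Ortholattice.compl_sup_eq]
  exact hOM x yᶜ h

theorem compl_le_olImp1_sup (hOM : IsOrthomodular α) (h : x ≤ yᶜ) (hz : x ≤ z) :
    yᶜ ≤ olImp1 (x ⊔ y) z := by
  rw [← hOM.sup_compl_sup_eq h, olImp1, sup_comm]
  exact sup_le_sup_left (le_inf le_sup_left hz) _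

theorem olImp1_compl_compl_sup (hOM : IsOrthomodular α) (h : x ≤ yᶜ) :
    olImp1 xᶜ (y ⊔ x)ᶜ = yᶜ := by
  have hle : (y ⊔ x)ᶜ ≤ xᶜ := Ortholattice.compl_le_compl_of_le le_sup_right
  rw [olImp1, Ortholattice.compl_compl, inf_eq_right.2 hle, sup_comm y]
  exact hOM.sup_compl_sup_eq h

theorem olImp1_compl_inf_compl (hOM : IsOrthomodular α) (h : k ≤ u) :
    olImp1 kᶜ (u ⊓ kᶜ) = u := by
  rw [olImp1, Ortholattice.compl_compl, inf_comm u, ← inf_assoc, inf_idem]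
  exact hOM k u h

end IsOrthomodular

theorem Godowski6.le_olImp1_of_le_cycle {α : Type*} [Ortholattice α] (h6 : Godowski6 α)
    {x a1 a2 a3 a4 a5 a6 : α} (h12 : x ≤ olImp1 a1 a2) (h23 : x ≤ olImp1 a2 a3)
    (h34 : x ≤ olImp1 a3 a4) (h45 : x ≤ olImp1 a4 a5) (h56 : x ≤ olImp1 a5 a6)
    (h61 : x ≤ olImp1 a6 a1) : x ≤ olImp1 a2 a1 := by
  have hx := le_inf (le_inf (le_inf (le_inf (le_inf h12 h23) h34) h45) h56) h61
  rw [h6 a1 a2 a3 a4 a5 a6] at hx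
  exact hx.trans (inf_le_left.trans inf_le_right)

/-- In an orthomodular ortholattice satisfying Godowski'\''s equation 6-Go, Mayet'\''s
Example 3 equation holds. -/
theorem stmt_12 (α : Type*) [Ortholattice α]
    (hOM : ∀ a b : α, a ≤ b → a ⊔ (aᶜ ⊓ b) = b)
    (h6go : ∀ a1 a2 a3 a4 a5 a6 : α,
      olImp1 a1 a2 ⊓ olImp1 a2 a3 ⊓ olImp1 a3 a4 ⊓ olImp1 a4 a5 ⊓ olImp1 a5 a6 ⊓
          olImp1 a6 a1 =
        olImp1 a6 a5 ⊓ olImp1 a5 a4 ⊓ olImp1 a4 a3 ⊓ olImp1 a3 a2 ⊓ olImp1 a2 a1 ⊓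
          olImp1 a1 a6) :
    ∀ a b c d e f : α, a ≤ bᶜ → b ≤ cᶜ → c ≤ dᶜ → d ≤ eᶜ → e ≤ fᶜ → f ≤ aᶜ →
      (a ⊔ b) ⊓ (d ⊔ e)ᶜ ⊓
          olImp1 (olImp1 (olImp1 (a ⊔ b) (d ⊔ e)ᶜ) (olImp1 (e ⊔ f) (b ⊔ c)ᶜ)ᶜ)ᶜ (c ⊔ d) ≤
        b ⊔ c ⊔ (e ⊔ f)ᶜ := by
  intro a b c d e f hab hbc hcd _ hef hfa
  have hOM : IsOrthomodular α := hOM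
  set u := olImp1 (a ⊔ b) (d ⊔ e)ᶜ
  set w := olImp1 (e ⊔ f) (b ⊔ c)ᶜ
  set k := u ⊓ wᶜ
  set x := (a ⊔ b) ⊓ (d ⊔ e)ᶜ ⊓ olImp1 (olImp1 u wᶜ)ᶜ (c ⊔ d)
  have hx_ab : x ≤ a ⊔ b := inf_le_left.trans inf_le_left
  have hx_de : x ≤ dᶜ ⊓ eᶜ :=
    (inf_le_left.trans inf_le_right).trans (Ortholattice.compl_sup_eq d e).le
  have hk_ef : k ≤ e ⊔ f := inf_le_right.trans (Ortholattice.compl_le_comm.1 compl_le_olImp1)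
  have hx_rev : x ≤ olImp1 kᶜ (e ⊔ f)ᶜ := by
    refine Godowski6.le_olImp1_of_le_cycle h6go
      (a3 := u ⊓ kᶜ) (a4 := c ⊔ d) (a5 := bᶜ) (a6 := fᶜ) ?_ ?_ ?_ ?_ ?_ ?_
    · rw [olImp1_eq_top_of_le (Ortholattice.compl_le_compl_of_le hk_ef)]
      exact le_top
    · rw [hOM.olImp1_compl_inf_compl inf_le_left]
      exact inf_le_left.trans inf_le_olImp1
    · rw [← compl_olImp1]
      exact inf_le_right
    · exact (hx_de.trans inf_le_left).trans
        (hOM.compl_le_olImp1_sup hcd (Ortholattice.le_compl_comm.1 hbc))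
    · exact hx_ab.trans (sup_le_olImp1_compl hab (Ortholattice.le_compl_comm.1 hfa))
    · rw [hOM.olImp1_compl_compl_sup (Ortholattice.le_compl_comm.1 hef)]
      exact hx_de.trans inf_le_right
  have hk : k ≤ (e ⊔ f)ᶜ ⊔ (b ⊔ c) := by
    have hw : wᶜ ≤ (e ⊔ f)ᶜ ⊔ (b ⊔ c)ᶜᶜ := compl_olImp1_le_compl_sup_compl
    rw [Ortholattice.compl_compl] at hw
    exact inf_le_right.trans hw
  calc x ≤ olImp1 kᶜ (e ⊔ f)ᶜ := hx_rev
    _ ≤ k ⊔ (e ⊔ f)ᶜ := olImp1_compl_le_sup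
    _ ≤ b ⊔ c ⊔ (e ⊔ f)ᶜ := sup_le (hk.trans (sup_comm _ _).le) le_sup_right
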